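/- There exists a constant C > 0, depending only on the sequence (a_n)_{n≥1}, such that with the increasing function a(α) = C(1+α) one has, for all y, ỹ ∈ H with y ≠ 0, the inequality ⟨F(y + ỹ), y/‖y‖_H⟩_H ≤ a(‖ỹ‖_H)(1 + ‖y‖_H), where ⟨·,·⟩_H is the inner product of H. -/

import Mathlib

noncomputable section

open scoped BigOperators RealInnerProductSpace
open MeasureTheory Filter

/-- The real Hilbert space ℓ² of square-summable sequences indexed by `n ≥ 1`. -/
abbrev l2 : Type := lp (fun _ : ℕ+ => ℝ) 2

/-- The real Hilbert space `H = ℝ × ℓ² × ℓ²` with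
`‖(x,u,v)‖² = |x|² + ‖u‖² + ‖v‖²`. -/
abbrev Hsp : Type := WithLp 2 (ℝ × WithLp 2 (l2 × l2))

/-- First (real) component of an element of `H`. -/
def Hx (y : Hsp) : ℝ := y.fst

/-- Second (ℓ²) component of an element of `H`. -/
def Hu (y : Hsp) : l2 := y.snd.fst

/-- Third (ℓ²) component of an element of `H`. -/
def Hv (y : Hsp) : l2 := y.snd.snd

/-- Build an element of `H` from its components. -/
def mkH (x : ℝ) (u v : l2) : Hsp := WithLp.toLp 2 (x, (WithLp.toLp 2 (u, v) : WithLp 2 (l2 × l2)))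

/-- The sequence `(a_n)` belongs to `O⁵`, i.e. `Σ (1+n²)⁵ aₙ² < ∞`. -/
def MemO5 (a : ℕ+ → ℝ) : Prop :=
  Summable fun n : ℕ+ => (1 + (n : ℝ) ^ 2) ^ 5 * a n ^ 2

/-- `F : H → H` is the drift map
`F(x,u,v) = (Σ √aₙ n (sin(nx) uₙ + cos(nx) vₙ), (√aₙ cos(nx))ₙ, (−√aₙ sin(nx))ₙ)`. -/
def IsDriftF (a : ℕ+ → ℝ) (F : Hsp → Hsp) : Prop :=
  ∀ y : Hsp,
    Hx (F y) = (∑' n : ℕ+, Real.sqrt (a n) * (n : ℝ) *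
        (Real.sin ((n : ℝ) * Hx y) * Hu y n + Real.cos ((n : ℝ) * Hx y) * Hv y n)) ∧
    (∀ n : ℕ+, Hu (F y) n = Real.sqrt (a n) * Real.cos ((n : ℝ) * Hx y)) ∧
    (∀ n : ℕ+, Hv (F y) n = -(Real.sqrt (a n) * Real.sin ((n : ℝ) * Hx y)))

/-!
Testing against the unit vector `y / ‖y‖` reduces the claim to the linear growth bound
`‖F z‖ ≤ 2K (1 + ‖z‖)` with `K² = Σ |aₙ| (1 + n²)`, which is finite for `a ∈ O⁵` by AM–GM against
`1 / n²`. Both ℓ² components of `F z` have norm at most `K`, and the first component pairs the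
ℓ² components of `z` with sequences of ℓ²-norm at most `K`, so Cauchy–Schwarz bounds it by
`K (‖u‖ + ‖v‖) ≤ 2K ‖z‖`.
-/

theorem abs_mul_one_add_sq_le {a t : ℝ} (ht : 1 ≤ t) :
    |a| * (1 + t ^ 2) ≤ (1 + t ^ 2) ^ 5 * a ^ 2 + 1 / t ^ 2 := by
  set q := 1 + t ^ 2
  have hq : t ^ 2 ≤ q ^ 3 := by
    have h1 : 1 ≤ q := by nlinarith
    exact (by linarith : t ^ 2 ≤ q).trans (le_self_pow₀ h1 (by norm_num))
  have amgm := two_mul_le_add_sq (|a| * q * t) (1 / t)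
  have hdecay : (|a| * q * t) ^ 2 ≤ q ^ 5 * a ^ 2 :=
    calc (|a| * q * t) ^ 2 = a ^ 2 * q ^ 2 * t ^ 2 := by rw [mul_pow, mul_pow, sq_abs]
      _ ≤ a ^ 2 * q ^ 2 * q ^ 3 := by gcongr
      _ = q ^ 5 * a ^ 2 := by ring
  have hmul : 2 * (|a| * q * t) * (1 / t) = 2 * (|a| * q) := by
    field_simp
  rw [hmul, one_div_pow] at amgm
  nlinarith [abs_nonneg a, show 0 ≤ q by positivity]

theorem MemO5.summable_abs_mul_one_add_sq {a : ℕ+ → ℝ} (ha : MemO5 a) :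
    Summable fun n : ℕ+ => |a n| * (1 + (n : ℝ) ^ 2) := by
  have hinv : Summable fun n : ℕ+ => 1 / (n : ℝ) ^ 2 :=
    (Real.summable_one_div_nat_pow.mpr one_lt_two).comp_injective PNat.coe_injective
  exact (ha.add hinv).of_nonneg_of_le (fun n => by positivity)
    fun n => abs_mul_one_add_sq_le (by exact_mod_cast n.pos)

theorem sq_sqrt_mul_le {a s M : ℝ} (hs : s ^ 2 ≤ M) : (√a * s) ^ 2 ≤ |a| * M := by
  rw [mul_pow, Real.sq_sqrt']
  exact mul_le_mul (max_le (le_abs_self a) (abs_nonneg a)) hs (sq_nonneg s) (abs_nonneg a)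

section SquareDominated

variable {ι : Type*} {b g : ι → ℝ}

theorem memℓp_two_of_sq_le (hb : Summable b) (hg : ∀ i, g i ^ 2 ≤ b i) : Memℓp g 2 :=
  memℓp_gen <| hb.of_nonneg_of_le (fun i => by positivity) fun i => by simpa using hg i

theorem lp.norm_le_sqrt_tsum_of_sq_le (hb : Summable b) {f : lp (fun _ : ι => ℝ) 2}
    (hf : ∀ i, f i ^ 2 ≤ b i) : ‖f‖ ≤ √(∑' i, b i) := by
  refine lp.norm_le_of_tsum_le (by norm_num) (Real.sqrt_nonneg _) ?_
  have hsum : Summable fun i => f i ^ 2 := hb.of_nonneg_of_le (fun i => sq_nonneg _) hf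
  have hb0 : 0 ≤ ∑' i, b i := tsum_nonneg fun i => (sq_nonneg _).trans (hf i)
  simpa [Real.sq_sqrt hb0] using hsum.tsum_le_tsum hf hb

theorem summable_mul_of_sq_le (hb : Summable b) (hg : ∀ i, g i ^ 2 ≤ b i)
    (u : lp (fun _ : ι => ℝ) 2) : Summable fun i => g i * u i :=
  (lp.summable_inner u ⟨g, memℓp_two_of_sq_le hb hg⟩).congr fun i => by simp

theorem abs_tsum_mul_le_of_sq_le (hb : Summable b) (hg : ∀ i, g i ^ 2 ≤ b i)
    (u : lp (fun _ : ι => ℝ) 2) : |∑' i, g i * u i| ≤ √(∑' i, b i) * ‖u‖ := by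
  set G : lp (fun _ : ι => ℝ) 2 := ⟨g, memℓp_two_of_sq_le hb hg⟩
  have hG : ‖G‖ ≤ √(∑' i, b i) := lp.norm_le_sqrt_tsum_of_sq_le hb hg
  calc |∑' i, g i * u i| = |⟪u, G⟫| := by simp [G, lp.inner_eq_tsum]
    _ ≤ ‖u‖ * ‖G‖ := abs_real_inner_le_norm u G
    _ ≤ √(∑' i, b i) * ‖u‖ := by rw [mul_comm]; gcongr

end SquareDominated

theorem WithLp.norm_le_norm_fst_add_norm_snd {p : ENNReal} [Fact (1 ≤ p)] {α β : Type*}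
    [SeminormedAddCommGroup α] [SeminormedAddCommGroup β] (x : WithLp p (α × β)) :
    ‖x‖ ≤ ‖x.fst‖ + ‖x.snd‖ := by
  have hx : x = WithLp.toLp p (x.fst, 0) + WithLp.toLp p (0, x.snd) := by
    apply WithLp.ofLp_injective
    ext <;> simp
  calc ‖x‖ ≤ ‖WithLp.toLp p (x.fst, (0 : β))‖ + ‖WithLp.toLp p ((0 : α), x.snd)‖ := by
        conv_lhs => rw [hx]
        exact norm_add_le _ _
    _ = ‖x.fst‖ + ‖x.snd‖ := by rw [WithLp.norm_toLp_fst, WithLp.norm_toLp_snd]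

theorem norm_le_abs_Hx_add_norm_Hu_add_norm_Hv (w : Hsp) : ‖w‖ ≤ |Hx w| + ‖Hu w‖ + ‖Hv w‖ :=
  calc ‖w‖ ≤ ‖w.fst‖ + ‖w.snd‖ := WithLp.norm_le_norm_fst_add_norm_snd w
    _ ≤ |Hx w| + (‖Hu w‖ + ‖Hv w‖) := by
        gcongr
        · rfl
        · exact WithLp.norm_le_norm_fst_add_norm_snd w.snd
    _ = |Hx w| + ‖Hu w‖ + ‖Hv w‖ := by ring

theorem norm_Hu_le (w : Hsp) : ‖Hu w‖ ≤ ‖w‖ :=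
  (WithLp.norm_fst_le (x := w.snd)).trans (WithLp.norm_snd_le (x := w))

theorem norm_Hv_le (w : Hsp) : ‖Hv w‖ ≤ ‖w‖ :=
  (WithLp.norm_snd_le (x := w.snd)).trans (WithLp.norm_snd_le (x := w))

def driftConst (a : ℕ+ → ℝ) : ℝ := √(∑' n : ℕ+, |a n| * (1 + (n : ℝ) ^ 2))

theorem driftConst_nonneg (a : ℕ+ → ℝ) : 0 ≤ driftConst a := Real.sqrt_nonneg _

namespace IsDriftF

variable {a : ℕ+ → ℝ} {F : Hsp → Hsp}

theorem abs_Hx_le (hO5 : MemO5 a) (hF : IsDriftF a F) (z : Hsp) :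
    |Hx (F z)| ≤ driftConst a * ‖Hu z‖ + driftConst a * ‖Hv z‖ := by
  have hw := hO5.summable_abs_mul_one_add_sq
  have hsin : ∀ n : ℕ+, (√(a n) * ((n : ℝ) * Real.sin (n * Hx z))) ^ 2
      ≤ |a n| * (1 + (n : ℝ) ^ 2) :=
    fun n => sq_sqrt_mul_le (by nlinarith [Real.sin_sq_le_one (n * Hx z), sq_nonneg (n : ℝ)])
  have hcos : ∀ n : ℕ+, (√(a n) * ((n : ℝ) * Real.cos (n * Hx z))) ^ 2
      ≤ |a n| * (1 + (n : ℝ) ^ 2) :=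
    fun n => sq_sqrt_mul_le (by nlinarith [Real.cos_sq_le_one (n * Hx z), sq_nonneg (n : ℝ)])
  have hsplit : Hx (F z) = ∑' n : ℕ+, √(a n) * ((n : ℝ) * Real.sin (n * Hx z)) * Hu z n
      + ∑' n : ℕ+, √(a n) * ((n : ℝ) * Real.cos (n * Hx z)) * Hv z n := by
    rw [(hF z).1, ← (summable_mul_of_sq_le hw hsin (Hu z)).tsum_add
      (summable_mul_of_sq_le hw hcos (Hv z))]
    exact tsum_congr fun n => by ring
  rw [hsplit]
  exact (abs_add_le _ _).trans
    (add_le_add (abs_tsum_mul_le_of_sq_le hw hsin _) (abs_tsum_mul_le_of_sq_le hw hcos _))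

theorem norm_Hu_le (hO5 : MemO5 a) (hF : IsDriftF a F) (z : Hsp) :
    ‖Hu (F z)‖ ≤ driftConst a :=
  lp.norm_le_sqrt_tsum_of_sq_le hO5.summable_abs_mul_one_add_sq fun n => by
    rw [(hF z).2.1 n]
    exact sq_sqrt_mul_le (by nlinarith [Real.cos_sq_le_one (n * Hx z), sq_nonneg (n : ℝ)])

theorem norm_Hv_le (hO5 : MemO5 a) (hF : IsDriftF a F) (z : Hsp) :
    ‖Hv (F z)‖ ≤ driftConst a :=
  lp.norm_le_sqrt_tsum_of_sq_le hO5.summable_abs_mul_one_add_sq fun n => by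
    rw [(hF z).2.2 n, neg_sq]
    exact sq_sqrt_mul_le (by nlinarith [Real.sin_sq_le_one (n * Hx z), sq_nonneg (n : ℝ)])

theorem norm_le (hO5 : MemO5 a) (hF : IsDriftF a F) (z : Hsp) :
    ‖F z‖ ≤ 2 * driftConst a * (1 + ‖z‖) := by
  have hK := driftConst_nonneg a
  have hu := mul_le_mul_of_nonneg_left (_root_.norm_Hu_le z) hK
  have hv := mul_le_mul_of_nonneg_left (_root_.norm_Hv_le z) hK
  linarith [norm_le_abs_Hx_add_norm_Hu_add_norm_Hv (F z), hF.abs_Hx_le hO5 z,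
    hF.norm_Hu_le hO5 z, hF.norm_Hv_le hO5 z]

end IsDriftF

theorem stmt4_general (a : ℕ+ → ℝ) (hO5 : MemO5 a)
    (F : Hsp → Hsp) (hF : IsDriftF a F) :
    ∃ C > (0 : ℝ), ∀ y ytil : Hsp, y ≠ 0 →
      ⟪F (y + ytil), ‖y‖⁻¹ • y⟫ ≤ (C * (1 + ‖ytil‖)) * (1 + ‖y‖) := by
  set K := 2 * driftConst a
  have hK : 0 ≤ K := mul_nonneg zero_le_two (driftConst_nonneg a)
  refine ⟨K + 1, by linarith, fun y ytil hy => ?_⟩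
  have hunit : ‖‖y‖⁻¹ • y‖ = 1 := norm_smul_inv_norm hy
  calc ⟪F (y + ytil), ‖y‖⁻¹ • y⟫ ≤ ‖F (y + ytil)‖ := by
        simpa [hunit] using real_inner_le_norm (F (y + ytil)) (‖y‖⁻¹ • y)
    _ ≤ K * (1 + ‖y + ytil‖) := hF.norm_le hO5 _
    _ ≤ K * (1 + (‖y‖ + ‖ytil‖)) := by gcongr; exact norm_add_le _ _
    _ ≤ (K + 1) * (1 + ‖ytil‖) * (1 + ‖y‖) := by
        have hyy := mul_nonneg (norm_nonneg y) (norm_nonneg ytil)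
        nlinarith [norm_nonneg y, norm_nonneg ytil, mul_nonneg hK hyy]

/-- There is a constant `C > 0` depending only on `(aₙ)` such that,
with the increasing function `a(α) = C(1+α)`, one has
`⟨F(y + ỹ), y/‖y‖⟩_H ≤ a(‖ỹ‖)(1 + ‖y‖)` for all `y ≠ 0` and `ỹ` in `H`. -/
theorem stmt4 (a : ℕ+ → ℝ) (hpos : ∀ n, 0 < a n) (hO5 : MemO5 a)
    (F : Hsp → Hsp) (hF : IsDriftF a F) :
    ∃ C > (0 : ℝ), ∀ y ytil : Hsp, y ≠ 0 →
      ⟪F (y + ytil), ‖y‖⁻¹ • y⟫ ≤ (C * (1 + ‖ytil‖)) * (1 + ‖y‖) :=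
  stmt4_general a hO5 F hF
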